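/- Every K45_n-consistent basic formula of maximal a-depth k and b-depth j is satisfiable at some (k,j)-model of the k-structures semantics. -/

import Mathlib

abbrev Atom := ℕ
abbrev World := Set Atom

/-- `KStr k` : the type of `k`-structures. A 0-structure is the trivial
empty object `PUnit.unit` (playing the role of `∅`); a `(k+1)`-structure is a
set of pairs of a world and a `k`-structure. Thus a 1-structure is a subset of
`W × {∅}`. -/
def KStr : ℕ → Type
  | 0 => PUnit
  | (k+1) => Set (World × KStr k)


def toSet {k : ℕ} (e : KStr (k+1)) : Set (World × KStr k) := e

instance {k : ℕ} : Membership (World × KStr k) (KStr (k+1)) :=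
  inferInstanceAs (Membership _ (Set (World × KStr k)))
instance {k : ℕ} : EmptyCollection (KStr (k+1)) :=
  inferInstanceAs (EmptyCollection (Set (World × KStr k)))
instance {k : ℕ} : Union (KStr (k+1)) :=
  inferInstanceAs (Union (Set (World × KStr k)))
instance {k : ℕ} : Compl (KStr (k+1)) :=
  inferInstanceAs (Compl (Set (World × KStr k)))

def unit0 : KStr 0 := PUnit.unit

/-- Formulas of the propositional multi-agent only-knowing language ONL_n
with modal operators L_a, N_a, L_b, N_b. -/
inductive Formula : Type
  | atom : Atom → Formula
  | fls  : Formula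
  | neg  : Formula → Formula
  | or   : Formula → Formula → Formula
  | La   : Formula → Formula
  | Na   : Formula → Formula
  | Lb   : Formula → Formula
  | Nb   : Formula → Formula

def Formula.and (α β : Formula) : Formula := .neg (.or (.neg α) (.neg β))
def Formula.imp (α β : Formula) : Formula := .or (.neg α) β
/-- O_a α := L_a α ∧ N_a ¬α -/
def Formula.Oa (α : Formula) : Formula := (Formula.La α).and (Formula.Na (.neg α))
/-- O_b α := L_b α ∧ N_b ¬α -/
def Formula.Ob (α : Formula) : Formula := (Formula.Lb α).and (Formula.Nb (.neg α))

/-- Satisfaction at a (k,j)-model `(ea, eb, w)`. -/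
def sat : (k : ℕ) → (j : ℕ) → KStr k → KStr j → World → Formula → Prop
  | _, _, _, _, w, .atom p => p ∈ w
  | _, _, _, _, _, .fls => False
  | k, j, ea, eb, w, .neg α => ¬ sat k j ea eb w α
  | k, j, ea, eb, w, .or α β => sat k j ea eb w α ∨ sat k j ea eb w β
  | 0, _, _, _, _, .La _ => True
  | (k+1), _, ea, _, _, .La α => ∀ p ∈ ea, sat (k+1) k ea p.2 p.1 α
  | 0, _, _, _, _, .Na _ => True
  | (k+1), _, ea, _, _, .Na α => ∀ p : World × KStr k, p ∉ ea → sat (k+1) k ea p.2 p.1 α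
  | _, 0, _, _, _, .Lb _ => True
  | k, (j+1), _, eb, _, .Lb α => ∀ p ∈ eb, sat j (j+1) p.2 eb p.1 α
  | _, 0, _, _, _, .Nb _ => True
  | k, (j+1), _, eb, _, .Nb α => ∀ p : World × KStr j, p ∉ eb → sat j (j+1) p.2 eb p.1 α

mutual
/-- a-depth of a formula -/
def depthA : Formula → ℕ
  | .atom _ => 1
  | .fls => 1
  | .neg α => depthA α
  | .or α β => max (depthA α) (depthA β)
  | .La α => depthA α
  | .Na α => depthA α
  | .Lb α => depthB α + 1
  | .Nb α => depthB α + 1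
/-- b-depth of a formula -/
def depthB : Formula → ℕ
  | .atom _ => 1
  | .fls => 1
  | .neg α => depthB α
  | .or α β => max (depthB α) (depthB β)
  | .Lb α => depthB α
  | .Nb α => depthB α
  | .La α => depthA α + 1
  | .Na α => depthA α + 1
end

/-- the restriction `e↓ₖ` of a structure -/
def restrict : (k : ℕ) → {m : ℕ} → KStr m → KStr k
  | 0, _, _ => unit0
  | (k+1), 0, _ => (∅ : Set (World × KStr k))
  | (k+1), (_+1), e => (fun p => (p.1, restrict k p.2)) '' (toSet e)

/-- validity: truth at all (k,j)-models of appropriate depth -/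
def valid (φ : Formula) : Prop :=
  ∀ (k j : ℕ), depthA φ ≤ k → depthB φ ≤ j →
    ∀ (ea : KStr k) (eb : KStr j) (w : World), sat k j ea eb w φ

def satisfiable (φ : Formula) : Prop :=
  ∃ (k j : ℕ) (ea : KStr k) (eb : KStr j) (w : World),
    depthA φ ≤ k ∧ depthB φ ≤ j ∧ sat k j ea eb w φ

/-- objective (non-modal) formulas -/
def objective : Formula → Prop
  | .atom _ => True
  | .fls => True
  | .neg α => objective α
  | .or α β => objective α ∧ objective β
  | .La _ => False
  | .Na _ => False
  | .Lb _ => False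
  | .Nb _ => False

/-- a-objective: all outermost modal operators are of agent b -/
def aObjective : Formula → Prop
  | .atom _ => True
  | .fls => True
  | .neg α => aObjective α
  | .or α β => aObjective α ∧ aObjective β
  | .La _ => False
  | .Na _ => False
  | .Lb _ => True
  | .Nb _ => True

/-- b-objective: all outermost modal operators are of agent a -/
def bObjective : Formula → Prop
  | .atom _ => True
  | .fls => True
  | .neg α => bObjective α
  | .or α β => bObjective α ∧ bObjective β
  | .La _ => True
  | .Na _ => True
  | .Lb _ => False
  | .Nb _ => False

/-- basic formulas: no N_a, N_b -/
def basic : Formula → Prop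
  | .atom _ => True
  | .fls => True
  | .neg α => basic α
  | .or α β => basic α ∧ basic β
  | .La α => basic α
  | .Lb α => basic α
  | .Na _ => False
  | .Nb _ => False

/-- set of a-objective formulas of b-depth ≤ d true at `(∅, e, w)` -/
def aTheory (d : ℕ) (e : KStr d) (w : World) : Set Formula :=
  {φ | aObjective φ ∧ depthB φ ≤ d ∧ sat 0 d unit0 e w φ}

def bTheory (d : ℕ) (e : KStr d) (w : World) : Set Formula :=
  {φ | bObjective φ ∧ depthA φ ≤ d ∧ sat d 0 e unit0 w φ}

/-- Obj⁺_a(e_a) -/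
def ObjA (d : ℕ) (ea : KStr (d+1)) : Set (Set Formula) :=
  {T | ∃ p : World × KStr d, p ∈ ea ∧ T = aTheory d p.2 p.1}

def ObjB (d : ℕ) (eb : KStr (d+1)) : Set (Set Formula) :=
  {T | ∃ p : World × KStr d, p ∈ eb ∧ T = bTheory d p.2 p.1}

/-- maximally satisfiable set of a-objective formulas of b-depth ≤ d -/
def maxSatA (d : ℕ) (S : Set Formula) : Prop :=
  (∀ φ ∈ S, aObjective φ ∧ depthB φ ≤ d) ∧
  (∃ (e : KStr d) (w : World), ∀ φ ∈ S, sat 0 d unit0 e w φ) ∧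
  (∀ ψ, aObjective ψ → depthB ψ ≤ d → ψ ∉ S →
    ¬ ∃ (e : KStr d) (w : World), ∀ φ ∈ insert ψ S, sat 0 d unit0 e w φ)

def maxSatB (d : ℕ) (S : Set Formula) : Prop :=
  (∀ φ ∈ S, bObjective φ ∧ depthA φ ≤ d) ∧
  (∃ (e : KStr d) (w : World), ∀ φ ∈ S, sat d 0 e unit0 w φ) ∧
  (∀ ψ, bObjective ψ → depthA ψ ≤ d → ψ ∉ S →
    ¬ ∃ (e : KStr d) (w : World), ∀ φ ∈ insert ψ S, sat d 0 e unit0 w φ)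

/-- `onlAux bA bB φ`: φ is admissible where `bA` records that N_a is banned
(we are in the scope of a b-modality) and `bB` that N_b is banned. -/
def onlAux : Bool → Bool → Formula → Prop
  | _, _, .atom _ => True
  | _, _, .fls => True
  | bA, bB, .neg α => onlAux bA bB α
  | bA, bB, .or α β => onlAux bA bB α ∧ onlAux bA bB β
  | bA, _, .La α => onlAux bA true α
  | bA, _, .Na α => bA = false ∧ onlAux bA true α
  | _, bB, .Lb α => onlAux true bB α
  | _, bB, .Nb α => bB = false ∧ onlAux true bB α

/-- ONL_n^- : no N_j in the scope of an L_i or N_i with i ≠ j -/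
def ONLminus (φ : Formula) : Prop := onlAux false false φ

inductive BoolComb (S : Set Formula) : Formula → Prop
  | base {φ} : φ ∈ S → BoolComb S φ
  | neg {φ} : BoolComb S φ → BoolComb S (.neg φ)
  | or {φ ψ} : BoolComb S φ → BoolComb S ψ → BoolComb S (.or φ ψ)

def stepL (S : Set Formula) : Set Formula :=
  {φ | BoolComb (S ∪ {ψ | ∃ α ∈ S, ψ = .La α ∨ ψ = .Na α ∨ ψ = .Lb α ∨ ψ = .Nb α}) φ}

/-- the hierarchy ONL_n^t (t ≥ 1), with ONL_n^1 = ONL_n^- -/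
def ONLt (t : ℕ) : Set Formula := stepL^[t-1] {φ | ONLminus φ}

def conjList : List Formula → Formula
  | [] => .neg .fls
  | (φ :: l) => φ.and (conjList l)

/-- instance of a propositional tautology -/
def Taut (φ : Formula) : Prop :=
  ∀ v : Formula → Bool, (∀ α, v (.neg α) = !v α) →
    (∀ α β, v (.or α β) = (v α || v β)) → v .fls = false → v φ = true

/-- K45_n provability (two agents) -/
inductive K45 : Formula → Prop
  | taut {φ} : Taut φ → K45 φ
  | kA (α β : Formula) : K45 ((Formula.La (α.imp β)).imp ((Formula.La α).imp (Formula.La β)))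
  | kB (α β : Formula) : K45 ((Formula.Lb (α.imp β)).imp ((Formula.Lb α).imp (Formula.Lb β)))
  | fourA (α : Formula) : K45 ((Formula.La α).imp (Formula.La (Formula.La α)))
  | fourB (α : Formula) : K45 ((Formula.Lb α).imp (Formula.Lb (Formula.Lb α)))
  | fiveA (α : Formula) : K45 ((Formula.neg (Formula.La α)).imp (Formula.La (Formula.neg (Formula.La α))))
  | fiveB (α : Formula) : K45 ((Formula.neg (Formula.Lb α)).imp (Formula.Lb (Formula.neg (Formula.Lb α))))
  | mp {α β} : K45 (α.imp β) → K45 α → K45 β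
  | necA {α} : K45 α → K45 (Formula.La α)
  | necB {α} : K45 α → K45 (Formula.Lb α)

def ConsSet (Γ : Set Formula) : Prop :=
  ∀ l : List Formula, (∀ φ ∈ l, φ ∈ Γ) → ¬ K45 (Formula.neg (conjList l))

/-- basic maximally K45_n-consistent set -/
def MCS (Γ : Set Formula) : Prop :=
  (∀ φ ∈ Γ, basic φ) ∧ ConsSet Γ ∧ ∀ φ, basic φ → (φ ∈ Γ ∨ Formula.neg φ ∈ Γ)

/-- worlds of the K45_n canonical model -/
def CW := {Γ : Set Formula // MCS Γ}

def RA (Γ Δ : CW) : Prop := ∀ α, Formula.La α ∈ Γ.val → α ∈ Δ.val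
def RB (Γ Δ : CW) : Prop := ∀ α, Formula.Lb α ∈ Γ.val → α ∈ Δ.val

/-- truth of basic formulas at a world of the canonical model -/
def csat (Γ : CW) : Formula → Prop
  | .atom p => Formula.atom p ∈ Γ.val
  | .fls => False
  | .neg α => ¬ csat Γ α
  | .or α β => csat Γ α ∨ csat Γ β
  | .La α => ∀ Δ : CW, RA Γ Δ → csat Δ α
  | .Lb α => ∀ Δ : CW, RB Γ Δ → csat Δ α
  | .Na _ => True
  | .Nb _ => True

/-- the propositional valuation [w] of a canonical world -/
def wval (Γ : CW) : World := {p | Formula.atom p ∈ Γ.val}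

/-- the (k,j)-correspondence structures; `corr true` is agent a's structure,
`corr false` agent b's -/
def corr : Bool → (k : ℕ) → CW → KStr k
  | _, 0, _ => unit0
  | ag, (k+1), Γ =>
    {p : World × KStr k |
      ∃ Δ : CW, (if ag then RA Γ Δ else RB Γ Δ) ∧ p.1 = wval Δ ∧ p.2 = corr (!ag) k Δ}

/-!
Extend `{α}` by Lindenbaum's lemma to a maximal consistent set `Γ` of basic formulas; by the
truth lemma `α` holds at `Γ` in the canonical model. The canonical relations are transitive and
euclidean, so all `R_ag`-successors of a world have the same `R_ag`-successors, and the
correspondence structure `corr ag k Γ` is constant along `R_ag`. Hence unfolding `sat` at the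
correspondence model retraces canonical truth, provided the structures are as deep as the
formula looks into them; that depth is bounded by `depthA α` and `depthB α`.
-/

namespace K45

variable {a b c g : Formula}

theorem imp_trans (h₁ : K45 (a.imp b)) (h₂ : K45 (b.imp c)) : K45 (a.imp c) :=
  ((K45.taut fun v hn ho _ => by
    simp only [Formula.imp, hn, ho]; cases v a <;> cases v b <;> cases v c <;> simp :
    K45 ((a.imp b).imp ((b.imp c).imp (a.imp c)))).mp h₁).mp h₂

theorem imp_intro (h : K45 b) : K45 (a.imp b) :=
  (K45.taut fun v hn ho _ => by
    simp only [Formula.imp, hn, ho]; cases v a <;> cases v b <;> simp :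
    K45 (b.imp (a.imp b))).mp h

theorem imp_and (h₁ : K45 (g.imp a)) (h₂ : K45 (g.imp c)) : K45 (g.imp (a.and c)) :=
  ((K45.taut fun v hn ho _ => by
    simp only [Formula.imp, Formula.and, hn, ho]; cases v g <;> cases v a <;> cases v c <;> simp :
    K45 ((g.imp a).imp ((g.imp c).imp (g.imp (a.and c))))).mp h₁).mp h₂

theorem conjList_nil : K45 (conjList []) :=
  K45.taut fun _ hn _ hf => by simp only [conjList, hn, hf]; rfl

theorem conjList_imp_of_mem {l : List Formula} {φ : Formula} (h : φ ∈ l) :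
    K45 ((conjList l).imp φ) := by
  induction l with
  | nil => simp at h
  | cons a l ih =>
    rcases List.mem_cons.mp h with rfl | h
    · exact K45.taut fun v hn ho _ => by
        simp only [conjList, Formula.imp, Formula.and, hn, ho]; cases v φ <;> simp
    · refine imp_trans (K45.taut fun v hn ho _ => ?_) (ih h)
      simp only [conjList, Formula.imp, Formula.and, hn, ho]
      cases v a <;> cases v (conjList l) <;> simp

theorem conjList_imp_conjList {l l' : List Formula} (h : ∀ φ ∈ l, φ ∈ l') :
    K45 ((conjList l').imp (conjList l)) := by
  induction l with
  | nil => exact imp_intro conjList_nil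
  | cons a l ih =>
    exact imp_and (conjList_imp_of_mem (h a List.mem_cons_self))
      (ih fun φ hφ => h φ (List.mem_cons_of_mem _ hφ))

end K45

theorem ConsSet.mono {Γ Δ : Set Formula} (hΔ : ConsSet Δ) (h : Γ ⊆ Δ) : ConsSet Γ :=
  fun l hl => hΔ l fun φ hφ => h (hl φ hφ)

open scoped Classical in
theorem exists_imp_neg_of_not_consSet_insert {ψ : Formula} {Γ : Set Formula}
    (h : ¬ ConsSet (insert ψ Γ)) :
    ∃ l : List Formula, (∀ φ ∈ l, φ ∈ Γ) ∧ K45 ((conjList l).imp (.neg ψ)) := by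
  simp only [ConsSet, not_forall, not_not] at h
  obtain ⟨l, hl, hK⟩ := h
  refine ⟨l.filter (· ≠ ψ), fun φ hφ => ?_, ?_⟩
  · rw [List.mem_filter, decide_eq_true_iff] at hφ
    exact (hl φ hφ.1).resolve_left hφ.2
  · have hsub : K45 ((conjList (ψ :: l.filter (· ≠ ψ))).imp (conjList l)) :=
      K45.conjList_imp_conjList fun φ hφ => by by_cases φ = ψ <;> simp_all
    refine (K45.taut fun v hn ho _ => ?_ :
      K45 ((conjList (ψ :: l.filter (· ≠ ψ))).imp (conjList l) |>.imp
        ((Formula.neg (conjList l)).imp ((conjList (l.filter (· ≠ ψ))).imp (.neg ψ))))).mp hsub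
      |>.mp hK
    simp only [conjList, Formula.imp, Formula.and, hn, ho]
    cases v ψ <;> cases v (conjList l) <;> cases v (conjList (l.filter (· ≠ ψ))) <;> simp

theorem consSet_singleton {α : Formula} (hc : ¬ K45 (.neg α)) : ConsSet {α} := by
  by_contra h
  rw [← LawfulSingleton.insert_empty_eq] at h
  obtain ⟨l, hl, hK⟩ := exists_imp_neg_of_not_consSet_insert h
  obtain rfl : l = [] := List.eq_nil_iff_forall_not_mem.2 hl
  exact hc (hK.mp K45.conjList_nil)

theorem consSet_insert_or_insert_neg {Γ : Set Formula} (hΓ : ConsSet Γ) (φ : Formula) :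
    ConsSet (insert φ Γ) ∨ ConsSet (insert (.neg φ) Γ) := by
  by_contra! h
  obtain ⟨l₁, hl₁, h₁⟩ := exists_imp_neg_of_not_consSet_insert h.1
  obtain ⟨l₂, hl₂, h₂⟩ := exists_imp_neg_of_not_consSet_insert h.2
  have c₁ := (K45.conjList_imp_conjList fun _ => List.mem_append_left l₂).imp_trans h₁
  have c₂ := (K45.conjList_imp_conjList fun _ => List.mem_append_right l₁).imp_trans h₂
  refine hΓ (l₁ ++ l₂) (by simpa [or_imp, forall_and] using And.intro hl₁ hl₂) ?_
  refine ((K45.taut fun v hn ho _ => ?_ : K45 ((Formula.imp _ (.neg φ)).imp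
    ((Formula.imp _ (.neg (.neg φ))).imp (.neg (conjList (l₁ ++ l₂)))))).mp c₁).mp c₂
  simp only [Formula.imp, hn, ho]
  cases v φ <;> cases v (conjList (l₁ ++ l₂)) <;> simp

theorem isOfFiniteCharacter_basic_consSet :
    Order.IsOfFiniteCharacter {T : Set Formula | (∀ φ ∈ T, basic φ) ∧ ConsSet T} := by
  refine fun T => ⟨fun hT U hU _ => ⟨fun φ hφ => hT.1 φ (hU hφ), hT.2.mono hU⟩,
    fun h => ⟨fun φ hφ => ?_, fun l hl => ?_⟩⟩
  · exact (h {φ} (Set.singleton_subset_iff.2 hφ) (Set.finite_singleton φ)).1 φ rfl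
  · exact (h {φ | φ ∈ l} hl l.finite_toSet).2 l fun _ => id

theorem exists_CW_superset {S : Set Formula} (hb : ∀ φ ∈ S, basic φ) (hc : ConsSet S) :
    ∃ Γ : CW, S ⊆ Γ.val := by
  obtain ⟨M, hSM, ⟨hMb, hMc⟩, hmax⟩ := isOfFiniteCharacter_basic_consSet.exists_maximal ⟨hb, hc⟩
  have mem_of_consSet_insert {ψ : Formula} (hψ : basic ψ) (h : ConsSet (insert ψ M)) : ψ ∈ M :=
    hmax ⟨Set.forall_mem_insert.2 ⟨hψ, hMb⟩, h⟩ (Set.subset_insert ψ M) (Set.mem_insert ψ M)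
  refine ⟨⟨M, hMb, hMc, fun φ hφ => ?_⟩, hSM⟩
  exact (consSet_insert_or_insert_neg hMc φ).imp (mem_of_consSet_insert hφ)
    (mem_of_consSet_insert hφ)

namespace CW

variable {Γ : CW} {φ ψ α β : Formula}

theorem basic_of_mem (h : φ ∈ Γ.val) : basic φ := Γ.2.1 φ h

theorem mem_of_derives {l : List Formula} (hl : ∀ ψ ∈ l, ψ ∈ Γ.val) (hφ : basic φ)
    (h : K45 ((conjList l).imp φ)) : φ ∈ Γ.val := by
  refine (Γ.2.2.2 φ hφ).resolve_right fun hn =>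
    Γ.2.2.1 (.neg φ :: l) (List.forall_mem_cons.2 ⟨hn, hl⟩) ((K45.taut fun v hn ho _ => ?_ :
      K45 (((conjList l).imp φ).imp (.neg (conjList (.neg φ :: l))))).mp h)
  simp only [conjList, Formula.imp, Formula.and, hn, ho]
  cases v φ <;> cases v (conjList l) <;> simp

theorem mem_of_imp (h : φ ∈ Γ.val) (hψ : basic ψ) (himp : K45 (φ.imp ψ)) : ψ ∈ Γ.val :=
  mem_of_derives (l := [φ]) (by simpa using h) hψ
    ((K45.conjList_imp_of_mem (List.mem_singleton_self φ)).imp_trans himp)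

theorem neg_mem_iff (hφ : basic φ) : .neg φ ∈ Γ.val ↔ φ ∉ Γ.val := by
  refine ⟨fun hn h => Γ.2.2.1 [φ, .neg φ] (by simp [h, hn]) (K45.taut fun v hn ho hf => ?_),
    (Γ.2.2.2 φ hφ).resolve_left⟩
  simp only [conjList, Formula.and, hn, ho, hf]
  cases v φ <;> simp

theorem fls_not_mem : .fls ∉ Γ.val :=
  fun h => Γ.2.2.1 [.fls] (by simpa using h) (K45.taut fun _ hn ho hf => by
    simp only [conjList, Formula.and, hn, ho, hf]; rfl)

theorem or_mem_iff (hα : basic α) (hβ : basic β) :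
    .or α β ∈ Γ.val ↔ α ∈ Γ.val ∨ β ∈ Γ.val := by
  refine ⟨fun h => or_iff_not_imp_left.2 fun hα' => ?_, ?_⟩
  · refine mem_of_derives (l := [.or α β, .neg α]) (by simp [h, (neg_mem_iff hα).2 hα'])
      hβ (K45.taut fun v hn ho _ => ?_)
    simp only [conjList, Formula.imp, Formula.and, hn, ho]
    cases v α <;> cases v β <;> simp
  · rintro (h | h) <;> refine mem_of_imp h ⟨hα, hβ⟩ (K45.taut fun v hn ho _ => ?_) <;>
    · simp only [Formula.imp, hn, ho]
      cases v α <;> cases v β <;> simp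

end CW

def Formula.box : Bool → Formula → Formula
  | true => .La
  | false => .Lb

def canonRel (ag : Bool) (Γ Δ : CW) : Prop := ∀ α, Formula.box ag α ∈ Γ.val → α ∈ Δ.val

section Agent

variable {ag : Bool} {Γ Δ E : CW} {α : Formula}

open Formula

theorem basic_box_iff : basic (box ag α) ↔ basic α := by cases ag <;> rfl

theorem K45.box_k (ag : Bool) (α β : Formula) :
    K45 ((box ag (α.imp β)).imp ((box ag α).imp (box ag β))) := by
  cases ag
  exacts [K45.kB α β, K45.kA α β]

theorem K45.box_nec (ag : Bool) {α : Formula} (h : K45 α) : K45 (box ag α) := by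
  cases ag
  exacts [K45.necB h, K45.necA h]

theorem K45.box_four (ag : Bool) (α : Formula) : K45 ((box ag α).imp (box ag (box ag α))) := by
  cases ag
  exacts [K45.fourB α, K45.fourA α]

theorem K45.box_five (ag : Bool) (α : Formula) :
    K45 ((neg (box ag α)).imp (box ag (neg (box ag α)))) := by
  cases ag
  exacts [K45.fiveB α, K45.fiveA α]

theorem K45.box_and (ag : Bool) (α β : Formula) :
    K45 (((box ag α).and (box ag β)).imp (box ag (α.and β))) := by
  have h : K45 (α.imp (β.imp (α.and β))) := K45.taut fun v hn ho _ => by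
    simp only [Formula.imp, Formula.and, hn, ho]
    cases v α <;> cases v β <;> simp
  have hbox := ((box_k ag _ _).mp (box_nec ag h)).imp_trans (box_k ag _ _)
  refine (K45.taut fun v hn ho _ => ?_ :
    K45 (((box ag α).imp ((box ag β).imp (box ag (α.and β)))).imp
      (((box ag α).and (box ag β)).imp (box ag (α.and β))))).mp hbox
  simp only [Formula.imp, Formula.and, hn, ho]
  cases v (box ag α) <;> cases v (box ag β) <;> simp

theorem K45.conjList_map_box_imp (ag : Bool) (l : List Formula) :
    K45 ((conjList (l.map (box ag))).imp (box ag (conjList l))) := by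
  induction l with
  | nil => exact imp_intro (box_nec ag conjList_nil)
  | cons α l ih =>
    exact (imp_and (conjList_imp_of_mem List.mem_cons_self)
      ((conjList_imp_conjList fun _ => List.mem_cons_of_mem _).imp_trans ih)).imp_trans
      (box_and ag _ _)

namespace CW

theorem exists_canonRel_not_mem (hα : basic α) (h : box ag α ∉ Γ.val) :
    ∃ Δ : CW, canonRel ag Γ Δ ∧ α ∉ Δ.val := by
  have hcons : ConsSet (insert (.neg α) {β | box ag β ∈ Γ.val}) := by
    by_contra hincons
    obtain ⟨l, hl, hK⟩ := exists_imp_neg_of_not_consSet_insert hincons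
    have hα' : K45 ((conjList l).imp α) := hK.imp_trans (K45.taut fun v hn ho _ => by
      simp only [Formula.imp, hn, ho]; cases v α <;> simp)
    exact h (mem_of_derives (l := l.map (box ag)) (by simpa using hl) (basic_box_iff.2 hα)
      ((K45.conjList_map_box_imp ag l).imp_trans ((K45.box_k ag _ _).mp (K45.box_nec ag hα'))))
  obtain ⟨Δ, hΔ⟩ := exists_CW_superset (S := insert (.neg α) {β | box ag β ∈ Γ.val})
    (Set.forall_mem_insert.2 ⟨hα, fun β hβ => basic_box_iff.1 (basic_of_mem hβ)⟩) hcons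
  exact ⟨Δ, fun β hβ => hΔ (Set.mem_insert_of_mem _ hβ),
    (neg_mem_iff hα).1 (hΔ (Set.mem_insert _ _))⟩

theorem box_mem_iff (hα : basic α) : box ag α ∈ Γ.val ↔ ∀ Δ, canonRel ag Γ Δ → α ∈ Δ.val := by
  refine ⟨fun h Δ hΔ => hΔ α h, fun h => by_contra fun hn => ?_⟩
  obtain ⟨Δ, hΔ, hαΔ⟩ := exists_canonRel_not_mem hα hn
  exact hαΔ (h Δ hΔ)

theorem mem_iff_csat {φ : Formula} (hφ : basic φ) : φ ∈ Γ.val ↔ csat Γ φ := by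
  induction φ generalizing Γ with
  | atom p => rfl
  | fls => exact iff_false_intro fls_not_mem
  | neg α ih => exact (neg_mem_iff (φ := α) hφ).trans (not_congr (ih hφ))
  | or α β ihα ihβ => exact (or_mem_iff hφ.1 hφ.2).trans (or_congr (ihα hφ.1) (ihβ hφ.2))
  | La α ih => exact (box_mem_iff (ag := true) (α := α) hφ).trans (forall₂_congr fun Δ _ => ih hφ)
  | Lb α ih => exact (box_mem_iff (ag := false) (α := α) hφ).trans (forall₂_congr fun Δ _ => ih hφ)
  | Na | Nb => exact hφ.elim

theorem canonRel_trans (h₁ : canonRel ag Γ Δ) (h₂ : canonRel ag Δ E) : canonRel ag Γ E :=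
  fun β hβ => h₂ β (h₁ _ (mem_of_imp hβ (basic_box_iff.2 (basic_of_mem hβ)) (K45.box_four ag β)))

theorem canonRel_euclidean (h₁ : canonRel ag Γ Δ) (h₂ : canonRel ag Γ E) : canonRel ag Δ E := by
  intro β hβ
  have hb := basic_of_mem hβ
  by_cases hΓ : box ag β ∈ Γ.val
  · exact h₂ β hΓ
  · have hΔ := h₁ (.neg (box ag β))
      (mem_of_imp ((neg_mem_iff hb).2 hΓ) (basic_box_iff.2 hb) (K45.box_five ag β))
    exact absurd hβ ((neg_mem_iff hb).1 hΔ)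

end CW

end Agent

theorem KStr.ext {k : ℕ} {e e' : KStr (k + 1)} (h : ∀ p, p ∈ e ↔ p ∈ e') : e = e' :=
  Set.ext h

section Correspondence

variable {ag : Bool} {k : ℕ} {Γ Δ : CW}

theorem mem_corr_succ_iff {p : World × KStr k} :
    p ∈ corr ag (k + 1) Γ ↔ ∃ Δ : CW, canonRel ag Γ Δ ∧ p.1 = wval Δ ∧ p.2 = corr (!ag) k Δ := by
  cases ag <;> rfl

theorem forall_mem_corr_succ_iff {P : World × KStr k → Prop} :
    (∀ p ∈ corr ag (k + 1) Γ, P p) ↔ ∀ Δ : CW, canonRel ag Γ Δ → P (wval Δ, corr (!ag) k Δ) := by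
  refine ⟨fun h Δ hΔ => h _ (mem_corr_succ_iff.2 ⟨Δ, hΔ, rfl, rfl⟩), fun h ⟨w, e⟩ hp => ?_⟩
  obtain ⟨Δ, hΔ, rfl, rfl⟩ := mem_corr_succ_iff.1 hp
  exact h Δ hΔ

theorem corr_eq_of_canonRel (h : canonRel ag Γ Δ) : ∀ k, corr ag k Γ = corr ag k Δ
  | 0 => rfl
  | k + 1 => KStr.ext fun _ => by
    simp only [mem_corr_succ_iff]
    exact exists_congr fun _ => and_congr_left' ⟨CW.canonRel_euclidean h, CW.canonRel_trans h⟩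

end Correspondence

theorem sat_La {k j : ℕ} {ea : KStr (k + 1)} {eb : KStr j} {w : World} {α : Formula} :
    sat (k + 1) j ea eb w (.La α) ↔ ∀ p ∈ ea, sat (k + 1) k ea p.2 p.1 α := by
  cases j <;> rfl

theorem sat_Lb {k j : ℕ} {ea : KStr k} {eb : KStr (j + 1)} {w : World} {α : Formula} :
    sat k (j + 1) ea eb w (.Lb α) ↔ ∀ p ∈ eb, sat j (j + 1) p.2 eb p.1 α := by
  cases k <;> rfl

/- `aRank φ` (`bRank φ`) is how deep into agent a's (b's) structure `sat` looks when evaluating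
`φ`; `depthA`, `depthB` overestimate it, e.g. `depthB (La (La p)) = 2` while the inner `La p`
is evaluated with a b-structure of depth 0. -/
mutual
def aRank : Formula → ℕ
  | .atom _ | .fls | .Lb _ | .Nb _ => 0
  | .neg α => aRank α
  | .or α β => max (aRank α) (aRank β)
  | .La α | .Na α => max (aRank α) (bRank α + 1)
def bRank : Formula → ℕ
  | .atom _ | .fls | .La _ | .Na _ => 0
  | .neg α => bRank α
  | .or α β => max (bRank α) (bRank β)
  | .Lb α | .Nb α => max (bRank α) (aRank α + 1)
end

theorem rank_le_depth (φ : Formula) :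
    aRank φ ≤ depthA φ ∧ bRank φ ≤ depthB φ ∧ bRank φ < depthA φ ∧ aRank φ < depthB φ := by
  induction φ <;> simp only [aRank, bRank, depthA, depthB] at * <;> omega

theorem sat_corr_iff_csat {φ : Formula} (hφ : basic φ) {k j : ℕ} (hk : aRank φ ≤ k)
    (hj : bRank φ ≤ j) (Γ : CW) :
    sat k j (corr true k Γ) (corr false j Γ) (wval Γ) φ ↔ csat Γ φ := by
  induction φ generalizing k j Γ with
  | atom p => simp only [sat, csat]; rfl
  | fls => simp only [sat, csat]
  | neg α ih =>
    simp only [sat, csat]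
    exact not_congr (ih hφ hk hj Γ)
  | or α β ihα ihβ =>
    simp only [aRank, bRank, max_le_iff] at hk hj
    simp only [sat, csat]
    exact or_congr (ihα hφ.1 hk.1 hj.1 Γ) (ihβ hφ.2 hk.2 hj.2 Γ)
  | La α ih =>
    simp only [aRank, max_le_iff] at hk
    obtain ⟨k, rfl⟩ := Nat.exists_eq_add_of_le' (Nat.le_of_add_left_le hk.2)
    rw [sat_La, forall_mem_corr_succ_iff]
    refine forall₂_congr fun Δ hΔ => ?_
    rw [corr_eq_of_canonRel hΔ]
    exact ih hφ hk.1 (by omega) Δ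
  | Lb α ih =>
    simp only [bRank, max_le_iff] at hj
    obtain ⟨j, rfl⟩ := Nat.exists_eq_add_of_le' (Nat.le_of_add_left_le hj.2)
    rw [sat_Lb, forall_mem_corr_succ_iff]
    refine forall₂_congr fun Δ hΔ => ?_
    rw [corr_eq_of_canonRel hΔ]
    exact ih hφ (by omega) hj.1 Δ
  | Na | Nb => exact hφ.elim

/-- every K45_n-consistent basic formula of a-depth k and
b-depth j is satisfiable at some (k,j)-model. -/
theorem K45_consistent_satisfiable (α : Formula) (hb : basic α) (hm : ONLminus α)
    (hc : ¬ K45 (Formula.neg α)) :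
    ∃ (ea : KStr (depthA α)) (eb : KStr (depthB α)) (w : World),
      sat (depthA α) (depthB α) ea eb w α := by
  obtain ⟨Γ, hΓ⟩ := exists_CW_superset (S := {α}) (by simpa using hb) (consSet_singleton hc)
  obtain ⟨hk, hj, -, -⟩ := rank_le_depth α
  exact ⟨_, _, _, (sat_corr_iff_csat hb hk hj Γ).2 ((CW.mem_iff_csat hb).1 (hΓ rfl))⟩
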